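/- For α, β > 0 define d_α = −2α/(9(3α+1)²(3α+2)), v_β = β(5β²+5β+1)/(8(1+2β)²(1+4β)²(3+4β)), w_β = β³/(8(1+2β)²(1+4β)²(3+4β)), and u_β = −β²/(16(1+2β)(1+4β)²(3+4β)), and let D_{α,β} be the 6×6 real matrix with rows: (0, 0, 0, d_α, d_α, d_α), (0, d_α, d_α, 0, 0, d_α), (d_α, 0, d_α, 0, d_α, 0), (d_α, d_α, 0, d_α, 0, 0), (v_β, u_β, u_β, u_β, u_β, w_β), (u_β, v_β, u_β, u_β, w_β, u_β). Then det(D_{α,β}) = α⁴β² / (2 · (3(3α+1))⁸ (3α+2)⁴ (2β+1)² (4β+1)² (4β+3)²), which is strictly positive for all α, β > 0; in particular D_{α,β} has rank 6. -/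

import Mathlib

noncomputable section

def dA (α : ℝ) : ℝ := -(2 * α) / (9 * (3 * α + 1) ^ 2 * (3 * α + 2))

def vB (β : ℝ) : ℝ :=
  β * (5 * β ^ 2 + 5 * β + 1) / (8 * (1 + 2 * β) ^ 2 * (1 + 4 * β) ^ 2 * (3 + 4 * β))

def wB (β : ℝ) : ℝ := β ^ 3 / (8 * (1 + 2 * β) ^ 2 * (1 + 4 * β) ^ 2 * (3 + 4 * β))

def uB (β : ℝ) : ℝ := -(β ^ 2) / (16 * (1 + 2 * β) * (1 + 4 * β) ^ 2 * (3 + 4 * β))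

/-- The matrix `D_{α,β}` of the Dirichlet face–volume enrichment functionals with respect to
the basis `(λ₁λ₂, λ₁λ₃, λ₁λ₄, λ₂λ₃, λ₂λ₄, λ₃λ₄)`. -/
def Dfv (α β : ℝ) : Matrix (Fin 6) (Fin 6) ℝ :=
  !![0, 0, 0, dA α, dA α, dA α;
     0, dA α, dA α, 0, 0, dA α;
     dA α, 0, dA α, 0, dA α, 0;
     dA α, dA α, 0, dA α, 0, 0;
     vB β, uB β, uB β, uB β, uB β, wB β;
     uB β, vB β, uB β, uB β, wB β, uB β]

/-! The first four rows of `D_{α,β}` are `d_α` times the face–edge incidence matrix of the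
tetrahedron, and expanding the determinant gives `2 d_α⁴ (v_β + w_β - 2 u_β)²`. The bracket
collapses to `β / (8 (1 + 2β) (1 + 4β) (3 + 4β))`, so the determinant is a positive constant
times `α⁴ β²` over squares of positive factors. -/

set_option maxRecDepth 40000 in
set_option maxHeartbeats 4000000 in
theorem det_faceVolume_pattern {R : Type*} [CommRing R] (d v w u : R) :
    (!![0, 0, 0, d, d, d;
       0, d, d, 0, 0, d;
       d, 0, d, 0, d, 0;
       d, d, 0, d, 0, 0;
       v, u, u, u, u, w;
       u, v, u, u, w, u] : Matrix (Fin 6) (Fin 6) R).det =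
    2 * d ^ 4 * (v + w - 2 * u) ^ 2 := by
  simp [Matrix.det_succ_row_zero, Fin.sum_univ_succ, Fin.succAbove,
    Matrix.submatrix_apply, Fin.castSucc, Fin.castAdd, Fin.castLE, Fin.ext_iff]
  norm_num [Fin.succ, Fin.ext_iff, show ((3 : Fin 6) : ℕ) = 3 from rfl,
    show ((3 : Fin 5) : ℕ) = 3 from rfl, show ((3 : Fin 4) : ℕ) = 3 from rfl]
  ring

theorem vB_add_wB_sub_two_mul_uB {β : ℝ} (hβ : 0 ≤ β) :
    vB β + wB β - 2 * uB β = β / (8 * (1 + 2 * β) * (1 + 4 * β) * (3 + 4 * β)) := by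
  unfold vB wB uB
  field_simp
  ring

theorem Dfv_det {α β : ℝ} (hα : 0 ≤ α) (hβ : 0 ≤ β) :
    (Dfv α β).det =
      α ^ 4 * β ^ 2 /
        (2 * (3 * (3 * α + 1)) ^ 8 * (3 * α + 2) ^ 4 * (2 * β + 1) ^ 2 *
          (4 * β + 1) ^ 2 * (4 * β + 3) ^ 2) := by
  rw [Dfv, det_faceVolume_pattern, vB_add_wB_sub_two_mul_uB hβ]
  unfold dA
  field_simp
  ring

/-- Determinant formula for `D_{α,β}`: it is strictly positive for all `α, β > 0`, hence
`D_{α,β}` has full rank 6. -/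
theorem Dfv_det_pos_rank_six (α β : ℝ) (hα : 0 < α) (hβ : 0 < β) :
    (Dfv α β).det =
        α ^ 4 * β ^ 2 /
          (2 * (3 * (3 * α + 1)) ^ 8 * (3 * α + 2) ^ 4 * (2 * β + 1) ^ 2 *
            (4 * β + 1) ^ 2 * (4 * β + 3) ^ 2) ∧
      0 < (Dfv α β).det ∧ (Dfv α β).rank = 6 := by
  have hdet := Dfv_det hα.le hβ.le
  have hpos : 0 < (Dfv α β).det := by rw [hdet]; positivity
  have hunit : IsUnit (Dfv α β) := (Matrix.isUnit_iff_isUnit_det _).2 hpos.ne'.isUnit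
  exact ⟨hdet, hpos, by rw [Matrix.rank_of_isUnit _ hunit, Fintype.card_fin]⟩

end
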